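/- Let T1 and T2 be unrooted binary phylogenetic trees on the same set of n ≥ 2 taxa. Then there exists a character f attaining d_MP(T1,T2) that is convex on one of the two trees and uses at most ⌊n/2⌋ states. -/
import Mathlib


namespace MPDist

/-- A rooted binary phylogenetic tree: leaves are labelled by taxa,
every internal vertex (including the root) has exactly two children. -/
inductive PTree (X : Type) : Type
  | leaf : X → PTree X
  | node : PTree X → PTree X → PTree X

namespace PTree

/-- The list of leaf labels (taxa) of a tree. -/
def leaves {X : Type} : PTree X → List X
  | .leaf x => [x]
  | .node l r => l.leaves ++ r.leaves

/-- Relabelling of taxa. -/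
def map {X Y : Type} (φ : X → Y) : PTree X → PTree Y
  | .leaf x => .leaf (φ x)
  | .node l r => .node (l.map φ) (r.map φ)

end PTree

/-- `T` is a phylogenetic tree on the taxon set `X`:
its leaves are bijectively labelled by the elements of `X`. -/
def IsPhylo {X : Type} (T : PTree X) : Prop :=
  T.leaves.Nodup ∧ ∀ x : X, x ∈ T.leaves

/-- A state-labelled binary tree (an extension assigns a state to every vertex). -/
inductive ETree (C : Type) : Type
  | leaf : C → ETree C
  | node : C → ETree C → ETree C → ETree C

namespace ETree

/-- The state at the root. -/
def root {C : Type} : ETree C → C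
  | .leaf c => c
  | .node c _ _ => c

/-- The number of edges `{u,v}` with different states at the two endpoints
(substitutions/mutations). -/
def changes {C : Type} [DecidableEq C] : ETree C → ℕ
  | .leaf _ => 0
  | .node c l r =>
      ((if l.root = c then 0 else 1) + (if r.root = c then 0 else 1)) +
        (l.changes + r.changes)

end ETree

/-- `g` is an extension of the character `f` to the tree `T`: it has the same
shape as `T`, assigns a state to every vertex, and agrees with `f` on the taxa. -/
inductive IsExtension {X C : Type} (f : X → C) : PTree X → ETree C → Prop
  | leaf (x : X) : IsExtension f (.leaf x) (.leaf (f x))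
  | node {l r : PTree X} {gl gr : ETree C} (c : C) :
      IsExtension f l gl → IsExtension f r gr →
      IsExtension f (.node l r) (.node c gl gr)

/-- The parsimony score `l_f(T)`: the minimum number of mutation edges
over all extensions of `f` to `T`. -/
noncomputable def pscore {X C : Type} [DecidableEq C] (f : X → C) (T : PTree X) : ℕ :=
  sInf { k : ℕ | ∃ g : ETree C, IsExtension f T g ∧ g.changes = k }

/-- The MP distance `d_MP(T1,T2) = max_f |l_f(T1) − l_f(T2)|`, the maximum taken
over all characters `f` on the taxon set (states drawn from `ℕ`). -/
noncomputable def dMP {X : Type} (T1 T2 : PTree X) : ℕ :=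
  sSup { k : ℕ | ∃ f : X → ℕ, k = ((pscore f T1 : ℤ) - (pscore f T2 : ℤ)).natAbs }

/-- `d^i_MP(T1,T2)`: as `dMP`, but over characters using at most `i` states. -/
noncomputable def dMPk {X : Type} (i : ℕ) (T1 T2 : PTree X) : ℕ :=
  sSup { k : ℕ | ∃ f : X → Fin i, k = ((pscore f T1 : ℤ) - (pscore f T2 : ℤ)).natAbs }

/-- `max_f (l_f(T2) − l_f(T1))` over all characters `f`. -/
noncomputable def maxDiff {X : Type} (T1 T2 : PTree X) : ℤ :=
  sSup { d : ℤ | ∃ f : X → ℕ, d = (pscore f T2 : ℤ) - (pscore f T1 : ℤ) }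

/-- `max_f (l_f(T2) − l_f(T1))` over all characters `f` with at most `i` states. -/
noncomputable def maxDiffk {X : Type} (i : ℕ) (T1 T2 : PTree X) : ℤ :=
  sSup { d : ℤ | ∃ f : X → Fin i, d = (pscore f T2 : ℤ) - (pscore f T1 : ℤ) }

/-- `gap(T1,T2) = |max_f(l_f(T2)−l_f(T1)) − max_f(l_f(T1)−l_f(T2))|`. -/
noncomputable def gap {X : Type} (T1 T2 : PTree X) : ℤ :=
  |maxDiff T1 T2 - maxDiff T2 T1|

/-- `gap` restricted to characters with at most `i` states. -/
noncomputable def gapk {X : Type} (i : ℕ) (T1 T2 : PTree X) : ℤ :=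
  |maxDiffk i T1 T2 - maxDiffk i T2 T1|

/-- `s` occurs as a (rooted) subtree of `t`. -/
inductive IsSubtree {X : Type} : PTree X → PTree X → Prop
  | refl (t : PTree X) : IsSubtree t t
  | left {s l r : PTree X} : IsSubtree s l → IsSubtree s (.node l r)
  | right {s l r : PTree X} : IsSubtree s r → IsSubtree s (.node l r)

/-- Taxa `a`, `b` form a cherry of `T`: they are leaves with a common parent. -/
def IsCherry {X : Type} (T : PTree X) (a b : X) : Prop :=
  IsSubtree (.node (.leaf a) (.leaf b)) T

/-- Relabel a tree on taxa `ℕ` by shifting all labels up by `s` (fresh copies). -/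
def shiftT (s : ℕ) (T : PTree ℕ) : PTree ℕ := T.map (fun x => x + s)

/-- `T_a = (((((2,3),4),5),6),1)` on taxa `{1,…,6}` (taxon `j` encoded as `j-1`). -/
def Ta6 : PTree ℕ :=
  .node (.node (.node (.node (.node (.leaf 1) (.leaf 2)) (.leaf 3)) (.leaf 4)) (.leaf 5)) (.leaf 0)

/-- `T_b = ((((2,6),(3,4)),5),1)` on taxa `{1,…,6}` (taxon `j` encoded as `j-1`). -/
def Tb6 : PTree ℕ :=
  .node (.node (.node (.node (.leaf 1) (.leaf 5)) (.node (.leaf 2) (.leaf 3))) (.leaf 4)) (.leaf 0)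

/-- `T_A`: two disjoint copies of `T_a` joined under a new root (12 taxa). -/
def TA12 : PTree ℕ := .node Ta6 (shiftT 6 Ta6)

/-- `T_B`: two disjoint copies of `T_b` joined under a new root (12 taxa). -/
def TB12 : PTree ℕ := .node Tb6 (shiftT 6 Tb6)

/-- `TkA k` is the tree `T^{k+1}_A`: `k+1` disjoint copies of `T_A` arranged
along a caterpillar backbone (so `TkA 0 = T^1_A = T_A`). -/
def TkA : ℕ → PTree ℕ
  | 0 => TA12
  | k+1 => .node (TkA k) (shiftT (12*(k+1)) TA12)

/-- `TkB k` is the tree `T^{k+1}_B`. -/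
def TkB : ℕ → PTree ℕ
  | 0 => TB12
  | k+1 => .node (TkB k) (shiftT (12*(k+1)) TB12)

/-- `T_a = (((5,(6,4)),3),((1,(8,2)),7))` on taxa `{1,…,8}` (taxon `j` encoded as `j-1`). -/
def Ta8 : PTree ℕ :=
  .node (.node (.node (.leaf 4) (.node (.leaf 5) (.leaf 3))) (.leaf 2))
        (.node (.node (.leaf 0) (.node (.leaf 7) (.leaf 1))) (.leaf 6))

/-- `T_b = (((7,((4,2),6)),3),(8,(1,5)))` on taxa `{1,…,8}` (taxon `j` encoded as `j-1`). -/
def Tb8 : PTree ℕ :=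
  .node (.node (.node (.leaf 6) (.node (.node (.leaf 3) (.leaf 1)) (.leaf 5))) (.leaf 2))
        (.node (.leaf 7) (.node (.leaf 0) (.leaf 4)))

/-- `T_A` (2-state construction): two disjoint copies of `T_a` under a new root (16 taxa). -/
def TA16 : PTree ℕ := .node Ta8 (shiftT 8 Ta8)

/-- `T_B` (2-state construction): two disjoint copies of `T_b` under a new root (16 taxa). -/
def TB16 : PTree ℕ := .node Tb8 (shiftT 8 Tb8)

/-- `T_AA`: two disjoint copies of `T_A` under a new root (32 taxa). -/
def TAA : PTree ℕ := .node TA16 (shiftT 16 TA16)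

/-- `T_BB`: two disjoint copies of `T_B` under a new root (32 taxa). -/
def TBB : PTree ℕ := .node TB16 (shiftT 16 TB16)

/-- `TkAA k` is the tree `T^{k+1}_AA` (so `TkAA 0 = T^1_AA = T_AA`). -/
def TkAA : ℕ → PTree ℕ
  | 0 => TAA
  | k+1 => .node (TkAA k) (shiftT (32*(k+1)) TAA)

/-- `TkBB k` is the tree `T^{k+1}_BB`. -/
def TkBB : ℕ → PTree ℕ
  | 0 => TBB
  | k+1 => .node (TkBB k) (shiftT (32*(k+1)) TBB)


/-- An unrooted binary phylogenetic tree on a taxon set: either a single edge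
between two leaves (`n = 2`), or three rooted binary subtrees joined at a
common internal (degree-3) vertex. -/
inductive UTree (X : Type) : Type
  | single : X → X → UTree X
  | triple : PTree X → PTree X → PTree X → UTree X

/-- The list of leaf labels (taxa) of an unrooted tree. -/
def UTree.leaves {X : Type} : UTree X → List X
  | .single x y => [x, y]
  | .triple a b c => a.leaves ++ (b.leaves ++ c.leaves)

/-- The leaves of `T` are bijectively labelled by the elements of `X`. -/
def IsUPhylo {X : Type} (T : UTree X) : Prop :=
  T.leaves.Nodup ∧ ∀ x : X, x ∈ T.leaves

/-- A state-labelled unrooted binary tree. -/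
inductive UETree (C : Type) : Type
  | single : C → C → UETree C
  | triple : C → ETree C → ETree C → ETree C → UETree C

/-- The number of edges of an unrooted tree whose endpoints carry
different states. -/
def UETree.changes {C : Type} [DecidableEq C] : UETree C → ℕ
  | .single a b => if a = b then 0 else 1
  | .triple c t1 t2 t3 =>
      ((if t1.root = c then 0 else 1) + (if t2.root = c then 0 else 1) +
        (if t3.root = c then 0 else 1)) +
        (t1.changes + (t2.changes + t3.changes))

/-- `g` is an extension of the character `f` to the unrooted tree `T`. -/
inductive IsUExtension {X C : Type} (f : X → C) : UTree X → UETree C → Prop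
  | single (x y : X) : IsUExtension f (.single x y) (.single (f x) (f y))
  | triple {t1 t2 t3 : PTree X} {e1 e2 e3 : ETree C} (c : C) :
      IsExtension f t1 e1 → IsExtension f t2 e2 → IsExtension f t3 e3 →
      IsUExtension f (.triple t1 t2 t3) (.triple c e1 e2 e3)

/-- The parsimony score `l_f(T)` of a character on an unrooted binary tree. -/
noncomputable def upscore {X C : Type} [DecidableEq C] (f : X → C) (T : UTree X) : ℕ :=
  sInf { k : ℕ | ∃ g : UETree C, IsUExtension f T g ∧ g.changes = k }

/-- `d_MP` for unrooted binary trees. -/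
noncomputable def udMP {X : Type} (T1 T2 : UTree X) : ℕ :=
  sSup { k : ℕ | ∃ f : X → ℕ, k = ((upscore f T1 : ℤ) - (upscore f T2 : ℤ)).natAbs }
/-! ### Auxiliary development -/

section Aux

open ETree

variable {X C : Type}

/-- Leaf colors of a state-labelled tree. -/
def ETree.leafColors : ETree C → List C
  | .leaf c => [c]
  | .node _ l r => l.leafColors ++ r.leafColors

/-- `e` has the same shape as the taxon tree `t`. -/
inductive Shaped : PTree X → ETree C → Prop
  | leaf (x : X) (c : C) : Shaped (.leaf x) (.leaf c)
  | node {l r : PTree X} {el er : ETree C} (c : C) :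
      Shaped l el → Shaped r er → Shaped (.node l r) (.node c el er)

lemma isExtension_shaped {f : X → C} {t : PTree X} {e : ETree C}
    (h : IsExtension f t e) : Shaped t e := by
  induction h with
  | leaf x => exact .leaf x _
  | node c hl hr ihl ihr => exact .node c ihl ihr

lemma isExtension_leafColors {f : X → C} {t : PTree X} {e : ETree C}
    (h : IsExtension f t e) : e.leafColors = t.leaves.map f := by
  induction h with
  | leaf x => rfl
  | node c hl hr ihl ihr => simp [ETree.leafColors, PTree.leaves, ihl, ihr]

lemma shaped_length {t : PTree X} {e : ETree C}
    (h : Shaped t e) : e.leafColors.length = t.leaves.length := by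
  induction h with
  | leaf x c => rfl
  | node c hl hr ihl ihr => simp [ETree.leafColors, PTree.leaves, ihl, ihr]

lemma isExtension_of_shaped {t : PTree X} {e : ETree C} (h : Shaped t e) :
    ∀ {f : X → C}, e.leafColors = t.leaves.map f → IsExtension f t e := by
  induction h with
  | leaf x c =>
    intro f hf
    simp [ETree.leafColors, PTree.leaves] at hf
    rw [hf]; exact .leaf x
  | @node l r el er c hl hr ihl ihr =>
    intro f hf
    simp only [ETree.leafColors, PTree.leaves, List.map_append] at hf
    have hlen : el.leafColors.length = (List.map f l.leaves).length := by
      rw [shaped_length hl]; simp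
    obtain ⟨h₁, h₂⟩ := List.append_inj hf hlen
    exact .node c (ihl h₁) (ihr h₂)

/-- congruence: extensions depend only on the values of `f` at the leaves. -/
lemma isExtension_congr {f g : X → C} {t : PTree X} {e : ETree C}
    (hfg : ∀ y ∈ t.leaves, f y = g y) (h : IsExtension f t e) : IsExtension g t e := by
  refine isExtension_of_shaped (isExtension_shaped h) ?_
  rw [isExtension_leafColors h]
  exact List.map_congr_left hfg

/-- A canonical extension (exists always). -/
def canonExt (f : X → C) : PTree X → ETree C
  | .leaf x => .leaf (f x)
  | .node l r => .node (canonExt f l).root (canonExt f l) (canonExt f r)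

lemma canonExt_isExtension (f : X → C) (t : PTree X) : IsExtension f t (canonExt f t) := by
  induction t with
  | leaf x => exact .leaf x
  | node l r ihl ihr => exact .node _ ihl ihr

/-- Number of edges of a rooted tree shape. -/
def PTree.psize : PTree X → ℕ
  | .leaf _ => 0
  | .node l r => l.psize + r.psize + 2

lemma changes_le_psize [DecidableEq C] {f : X → C} {t : PTree X} {e : ETree C}
    (h : IsExtension f t e) : e.changes ≤ t.psize := by
  induction h with
  | leaf x => simp [ETree.changes, PTree.psize]
  | node c hl hr ihl ihr =>
    simp only [ETree.changes, PTree.psize]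
    split_ifs <;> omega

lemma pscore_nonempty [DecidableEq C] (f : X → C) (t : PTree X) :
    { k : ℕ | ∃ g : ETree C, IsExtension f t g ∧ g.changes = k }.Nonempty :=
  ⟨_, canonExt f t, canonExt_isExtension f t, rfl⟩

lemma pscore_le_changes [DecidableEq C] {f : X → C} {t : PTree X} {e : ETree C}
    (h : IsExtension f t e) : pscore f t ≤ e.changes :=
  Nat.sInf_le ⟨e, h, rfl⟩

lemma pscore_le_psize [DecidableEq C] (f : X → C) (t : PTree X) : pscore f t ≤ t.psize :=
  le_trans (pscore_le_changes (canonExt_isExtension f t)) (changes_le_psize (canonExt_isExtension f t))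

lemma exists_pscore_ext [DecidableEq C] (f : X → C) (t : PTree X) :
    ∃ e : ETree C, IsExtension f t e ∧ e.changes = pscore f t := by
  have := Nat.sInf_mem (pscore_nonempty f t)
  exact this

end Aux
set_option linter.unusedSectionVars false

section Fitch

open ETree

variable {X C : Type} [DecidableEq C]

/-- Leaf-supported extensions: every vertex shares its state with a leaf of
its own component. -/
inductive LS : ETree C → Prop
  | leaf (c : C) : LS (.leaf c)
  | node {l r : ETree C} (c : C) : LS l → LS r → (l.root = c ∨ r.root = c) →
      LS (.node c l r)

lemma LS.root_mem_leafColors {e : ETree C} (h : LS e) : e.root ∈ e.leafColors := by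
  induction h with
  | leaf c => simp [ETree.leafColors, ETree.root]
  | @node l r c hl hr hor ihl ihr =>
    simp only [ETree.leafColors, ETree.root, List.mem_append]
    rcases hor with h | h
    · left; rw [← h]; exact ihl
    · right; rw [← h]; exact ihr

/-- Fitch set. -/
def fitchF (f : X → C) : PTree X → Finset C
  | .leaf x => {f x}
  | .node l r =>
      if (fitchF f l ∩ fitchF f r).Nonempty then fitchF f l ∩ fitchF f r
      else fitchF f l ∪ fitchF f r

/-- Fitch score. -/
def fitchS (f : X → C) : PTree X → ℕ
  | .leaf _ => 0
  | .node l r =>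
      fitchS f l + fitchS f r + (if (fitchF f l ∩ fitchF f r).Nonempty then 0 else 1)

lemma fitchF_nonempty (f : X → C) (t : PTree X) : (fitchF f t).Nonempty := by
  induction t with
  | leaf x => exact ⟨f x, by simp [fitchF]⟩
  | node l r ihl ihr =>
    rw [fitchF]
    split_ifs with h
    · exact h
    · exact ihl.mono Finset.subset_union_left

lemma fitch_lower {f : X → C} {t : PTree X} {e : ETree C} (h : IsExtension f t e) :
    fitchS f t + (if e.root ∈ fitchF f t then 0 else 1) ≤ e.changes := by
  induction h with
  | leaf x => simp [fitchS, fitchF, ETree.root, ETree.changes]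
  | @node l r gl gr c hl hr ihl ihr =>
    have Hl0 : fitchS f l ≤ gl.changes := by have h := ihl; split_ifs at h <;> omega
    have Hr0 : fitchS f r ≤ gr.changes := by have h := ihr; split_ifs at h <;> omega
    have Hl1 : gl.root ∉ fitchF f l → fitchS f l + 1 ≤ gl.changes := by
      intro h; have h2 := ihl; rw [if_neg h] at h2; omega
    have Hr1 : gr.root ∉ fitchF f r → fitchS f r + 1 ≤ gr.changes := by
      intro h; have h2 := ihr; rw [if_neg h] at h2; omega
    have key : ∀ (s : ETree C) (F : Finset C) (fs : ℕ), (fs ≤ s.changes) →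
        (s.root ∉ F → fs + 1 ≤ s.changes) → c ∉ F →
        fs + 1 ≤ (if s.root = c then 0 else 1) + s.changes := by
      intro s F fs h0 h1 hcm
      by_cases hs : s.root = c
      · rw [if_pos hs]; have := h1 (by rw [hs]; exact hcm); omega
      · rw [if_neg hs]; omega
    have KL := key gl (fitchF f l) (fitchS f l) Hl0 Hl1
    have KR := key gr (fitchF f r) (fitchS f r) Hr0 Hr1
    have KL0 : fitchS f l ≤ (if gl.root = c then 0 else 1) + gl.changes := by
      split_ifs <;> omega
    have KR0 : fitchS f r ≤ (if gr.root = c then 0 else 1) + gr.changes := by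
      split_ifs <;> omega
    rw [show (ETree.node c gl gr).root = c from rfl,
        show (ETree.node c gl gr).changes =
          ((if gl.root = c then 0 else 1) + (if gr.root = c then 0 else 1)) +
            (gl.changes + gr.changes) from rfl]
    simp only [fitchS, fitchF]
    by_cases hne : (fitchF f l ∩ fitchF f r).Nonempty
    · simp only [if_pos hne]
      by_cases hc : c ∈ fitchF f l ∩ fitchF f r
      · rw [if_pos hc]; omega
      · rw [if_neg hc]
        have hor : c ∉ fitchF f l ∨ c ∉ fitchF f r := by
          rw [Finset.mem_inter] at hc; tauto
        rcases hor with h | h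
        · have := KL h; omega
        · have := KR h; omega
    · simp only [if_neg hne]
      by_cases hc : c ∈ fitchF f l ∪ fitchF f r
      · rw [if_pos hc]
        rcases Finset.mem_union.1 hc with h | h
        · have hnr : c ∉ fitchF f r := fun hr2 => hne ⟨c, Finset.mem_inter.2 ⟨h, hr2⟩⟩
          have := KR hnr; omega
        · have hnl : c ∉ fitchF f l := fun hl2 => hne ⟨c, Finset.mem_inter.2 ⟨hl2, h⟩⟩
          have := KL hnl; omega
      · rw [if_neg hc]
        rw [Finset.mem_union] at hc; push_neg at hc
        have := KL hc.1; have := KR hc.2; omega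

lemma fitch_upper (f : X → C) (t : PTree X) :
    ∀ c ∈ fitchF f t, ∃ e : ETree C, IsExtension f t e ∧ e.root = c ∧
      e.changes = fitchS f t ∧ LS e := by
  induction t with
  | leaf x =>
    intro c hc
    simp [fitchF] at hc
    subst hc
    exact ⟨.leaf (f x), .leaf x, rfl, rfl, .leaf _⟩
  | node l r ihl ihr =>
    intro c hc
    simp only [fitchF] at hc
    by_cases hne : (fitchF f l ∩ fitchF f r).Nonempty
    · rw [if_pos hne] at hc
      obtain ⟨hcl, hcr⟩ := Finset.mem_inter.1 hc
      obtain ⟨el, hel, hrl, hchl, hlsl⟩ := ihl c hcl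
      obtain ⟨er, her, hrr, hchr, hlsr⟩ := ihr c hcr
      refine ⟨.node c el er, .node c hel her, rfl, ?_, .node c hlsl hlsr (Or.inl hrl)⟩
      simp [ETree.changes, hrl, hrr, hchl, hchr, fitchS, hne]
    · rw [if_neg hne] at hc
      have hdisj : ∀ a, a ∈ fitchF f l → a ∈ fitchF f r → False := by
        intro a ha hb; exact hne ⟨a, Finset.mem_inter.2 ⟨ha, hb⟩⟩
      rcases Finset.mem_union.1 hc with hcl | hcr
      · obtain ⟨c', hc'⟩ := fitchF_nonempty f r
        obtain ⟨el, hel, hrl, hchl, hlsl⟩ := ihl c hcl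
        obtain ⟨er, her, hrr, hchr, hlsr⟩ := ihr c' hc'
        have hc'c : c' ≠ c := fun h => hdisj c (h ▸ hcl) (h ▸ hc')
        refine ⟨.node c el er, .node c hel her, rfl, ?_, .node c hlsl hlsr (Or.inl hrl)⟩
        simp [ETree.changes, hrl, hrr, hchl, hchr, fitchS, hne, hc'c]
        omega
      · obtain ⟨c', hc'⟩ := fitchF_nonempty f l
        obtain ⟨el, hel, hrl, hchl, hlsl⟩ := ihl c' hc'
        obtain ⟨er, her, hrr, hchr, hlsr⟩ := ihr c hcr
        have hc'c : c' ≠ c := fun h => hdisj c' hc' (h ▸ hcr)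
        refine ⟨.node c el er, .node c hel her, rfl, ?_, .node c hlsl hlsr (Or.inr hrr)⟩
        simp [ETree.changes, hrl, hrr, hchl, hchr, fitchS, hne, hc'c]
        omega

lemma pscore_eq_fitchS (f : X → C) (t : PTree X) : pscore f t = fitchS f t := by
  apply le_antisymm
  · obtain ⟨c, hc⟩ := fitchF_nonempty f t
    obtain ⟨e, he, _, hch, _⟩ := fitch_upper f t c hc
    exact hch ▸ pscore_le_changes he
  · apply le_csInf (pscore_nonempty f t)
    rintro k ⟨e, he, rfl⟩
    have := fitch_lower he
    split_ifs at this <;> omega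

/-- There is a minimum extension which is leaf-supported. -/
lemma exists_min_LS_ext (f : X → C) (t : PTree X) :
    ∃ e : ETree C, IsExtension f t e ∧ e.changes = pscore f t ∧ LS e := by
  obtain ⟨c, hc⟩ := fitchF_nonempty f t
  obtain ⟨e, he, _, hch, hls⟩ := fitch_upper f t c hc
  exact ⟨e, he, by rw [hch, pscore_eq_fitchS], hls⟩

end Fitch
section Relabel

open ETree

variable {X C : Type} [DecidableEq C]

/-- Relabel an extension so that each monochromatic component gets its own
fresh id: `cur` is the id of the component of the root, `next` the next
fresh id. -/
def rl : ETree C → ℕ → ℕ → ETree ℕ × ℕ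
  | .leaf _, cur, next => (.leaf cur, next)
  | .node c l r, cur, next =>
      let pl := if l.root = c then rl l cur next else rl l next (next + 1)
      let pr := if r.root = c then rl r cur pl.2 else rl r pl.2 (pl.2 + 1)
      (.node cur pl.1 pr.1, pr.2)

lemma rl_root (e : ETree C) (cur next : ℕ) : (rl e cur next).1.root = cur := by
  cases e <;> simp [rl, ETree.root]

lemma rl_snd (e : ETree C) : ∀ cur next : ℕ, (rl e cur next).2 = next + e.changes := by
  induction e with
  | leaf c => intro cur next; simp [rl, ETree.changes]
  | node c l r ihl ihr =>
    intro cur next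
    by_cases h1 : l.root = c <;> by_cases h2 : r.root = c <;>
      simp [rl, h1, h2, ihl, ihr, ETree.changes] <;> omega

lemma rl_tt {c : C} {l r : ETree C} (h1 : l.root = c) (h2 : r.root = c) (cur next : ℕ) :
    (rl (.node c l r) cur next).1 =
      .node cur (rl l cur next).1 (rl r cur (next + l.changes)).1 := by
  simp [rl, h1, h2, rl_snd]

lemma rl_tf {c : C} {l r : ETree C} (h1 : l.root = c) (h2 : ¬ r.root = c) (cur next : ℕ) :
    (rl (.node c l r) cur next).1 =
      .node cur (rl l cur next).1
        (rl r (next + l.changes) (next + l.changes + 1)).1 := by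
  simp [rl, h1, h2, rl_snd]

lemma rl_ft {c : C} {l r : ETree C} (h1 : ¬ l.root = c) (h2 : r.root = c) (cur next : ℕ) :
    (rl (.node c l r) cur next).1 =
      .node cur (rl l next (next + 1)).1 (rl r cur (next + 1 + l.changes)).1 := by
  simp [rl, h1, h2, rl_snd]

lemma rl_ff {c : C} {l r : ETree C} (h1 : ¬ l.root = c) (h2 : ¬ r.root = c) (cur next : ℕ) :
    (rl (.node c l r) cur next).1 =
      .node cur (rl l next (next + 1)).1
        (rl r (next + 1 + l.changes) (next + 1 + l.changes + 1)).1 := by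
  simp [rl, h1, h2, rl_snd]

lemma changes_node (c : C) (l r : ETree C) :
    (ETree.node c l r).changes =
      ((if l.root = c then 0 else 1) + (if r.root = c then 0 else 1)) +
        (l.changes + r.changes) := rfl

lemma leafColors_node (c : C) (l r : ETree C) :
    (ETree.node c l r).leafColors = l.leafColors ++ r.leafColors := rfl

lemma rl_changes (e : ETree C) : ∀ cur next : ℕ, cur < next →
    ((rl e cur next).1).changes = e.changes := by
  induction e with
  | leaf c => intro cur next _; simp [rl, ETree.changes]
  | node c l r ihl ihr =>
    intro cur next hlt
    by_cases h1 : l.root = c <;> by_cases h2 : r.root = c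
    · rw [rl_tt h1 h2, changes_node, changes_node, if_pos h1, if_pos h2,
        rl_root, rl_root, if_pos rfl]
      rw [ihl cur next hlt, ihr cur (next + l.changes) (by omega)]
    · rw [rl_tf h1 h2, changes_node, changes_node, if_pos h1, if_neg h2,
        rl_root, rl_root, if_pos rfl, if_neg (by omega : ¬ (next + l.changes) = cur),
        ihl cur next hlt, ihr (next + l.changes) (next + l.changes + 1) (by omega)]
    · rw [rl_ft h1 h2, changes_node, changes_node, if_neg h1, if_pos h2,
        rl_root, rl_root, if_neg (by omega : ¬ next = cur), if_pos rfl,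
        ihl next (next + 1) (by omega), ihr cur (next + 1 + l.changes) (by omega)]
    · rw [rl_ff h1 h2, changes_node, changes_node, if_neg h1, if_neg h2,
        rl_root, rl_root, if_neg (by omega : ¬ next = cur),
        if_neg (by omega : ¬ (next + 1 + l.changes) = cur),
        ihl next (next + 1) (by omega),
        ihr (next + 1 + l.changes) (next + 1 + l.changes + 1) (by omega)]

lemma rl_length (e : ETree C) : ∀ cur next : ℕ,
    ((rl e cur next).1).leafColors.length = e.leafColors.length := by
  induction e with
  | leaf c => intro cur next; simp [rl, ETree.leafColors]
  | node c l r ihl ihr =>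
    intro cur next
    by_cases h1 : l.root = c <;> by_cases h2 : r.root = c <;>
      [rw [rl_tt h1 h2]; rw [rl_tf h1 h2]; rw [rl_ft h1 h2]; rw [rl_ff h1 h2]] <;>
      simp [leafColors_node, ihl, ihr]

lemma rl_range (e : ETree C) : ∀ cur next : ℕ, cur < next →
    ∀ id ∈ ((rl e cur next).1).leafColors,
      id = cur ∨ (next ≤ id ∧ id < next + e.changes) := by
  induction e with
  | leaf c => intro cur next _ id hid; simp [rl, ETree.leafColors] at hid; exact Or.inl hid
  | node c l r ihl ihr =>
    intro cur next hlt id hid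
    by_cases h1 : l.root = c <;> by_cases h2 : r.root = c
    · rw [rl_tt h1 h2, leafColors_node, List.mem_append] at hid
      rw [changes_node, if_pos h1, if_pos h2]
      rcases hid with hid | hid
      · rcases ihl cur next hlt id hid with h | h
        · exact Or.inl h
        · right; omega
      · rcases ihr cur (next + l.changes) (by omega) id hid with h | h
        · exact Or.inl h
        · right; omega
    · rw [rl_tf h1 h2, leafColors_node, List.mem_append] at hid
      rw [changes_node, if_pos h1, if_neg h2]
      rcases hid with hid | hid
      · rcases ihl cur next hlt id hid with h | h
        · exact Or.inl h
        · right; omega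
      · rcases ihr (next + l.changes) (next + l.changes + 1) (by omega) id hid with h | h
        · right; omega
        · right; omega
    · rw [rl_ft h1 h2, leafColors_node, List.mem_append] at hid
      rw [changes_node, if_neg h1, if_pos h2]
      rcases hid with hid | hid
      · rcases ihl next (next + 1) (by omega) id hid with h | h
        · right; omega
        · right; omega
      · rcases ihr cur (next + 1 + l.changes) (by omega) id hid with h | h
        · exact Or.inl h
        · right; omega
    · rw [rl_ff h1 h2, leafColors_node, List.mem_append] at hid
      rw [changes_node, if_neg h1, if_neg h2]
      rcases hid with hid | hid
      · rcases ihl next (next + 1) (by omega) id hid with h | h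
        · right; omega
        · right; omega
      · rcases ihr (next + 1 + l.changes) (next + 1 + l.changes + 1) (by omega) id hid with h | h
        · right; omega
        · right; omega

end Relabel
section Relabel2

open ETree List

variable {X C : Type} [DecidableEq C]

lemma zip_split {l r : List C} {L R : List ℕ} (h : l.length = L.length) :
    List.zip (l ++ r) (L ++ R) = List.zip l L ++ List.zip r R :=
  List.zip_append h

lemma rl_coherent (e : ETree C) : ∀ cur next : ℕ, cur < next →
    ∀ p ∈ List.zip e.leafColors ((rl e cur next).1).leafColors,
      p.2 = cur → p.1 = e.root := by
  induction e with
  | leaf c =>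
    intro cur next _ p hp _
    simp [rl, ETree.leafColors] at hp
    rw [hp]; rfl
  | node c l r ihl ihr =>
    intro cur next hlt p hp hpc
    by_cases h1 : l.root = c <;> by_cases h2 : r.root = c
    · rw [rl_tt h1 h2, leafColors_node, leafColors_node,
        zip_split (rl_length l cur next).symm, List.mem_append] at hp
      rcases hp with hp | hp
      · have := ihl cur next hlt _ hp hpc
        rw [this, h1]; rfl
      · have := ihr cur (next + l.changes) (by omega) _ hp hpc
        rw [this, h2]; rfl
    · rw [rl_tf h1 h2, leafColors_node, leafColors_node,
        zip_split (rl_length l cur next).symm, List.mem_append] at hp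
      rcases hp with hp | hp
      · have := ihl cur next hlt _ hp hpc
        rw [this, h1]; rfl
      · have := (List.of_mem_zip hp).2
        have := rl_range r (next + l.changes) (next + l.changes + 1) (by omega) _ this
        omega
    · rw [rl_ft h1 h2, leafColors_node, leafColors_node,
        zip_split (rl_length l next (next+1)).symm, List.mem_append] at hp
      rcases hp with hp | hp
      · have := (List.of_mem_zip hp).2
        have := rl_range l next (next + 1) (by omega) _ this
        omega
      · have := ihr cur (next + 1 + l.changes) (by omega) _ hp hpc
        rw [this, h2]; rfl
    · rw [rl_ff h1 h2, leafColors_node, leafColors_node,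
        zip_split (rl_length l next (next+1)).symm, List.mem_append] at hp
      rcases hp with hp | hp
      · have := (List.of_mem_zip hp).2
        have := rl_range l next (next + 1) (by omega) _ this
        omega
      · have := (List.of_mem_zip hp).2
        have := rl_range r (next + 1 + l.changes) (next + 1 + l.changes + 1) (by omega) _ this
        omega

lemma rl_fun (e : ETree C) : ∀ cur next : ℕ, cur < next →
    ∀ p ∈ List.zip e.leafColors ((rl e cur next).1).leafColors,
    ∀ q ∈ List.zip e.leafColors ((rl e cur next).1).leafColors,
      p.2 = q.2 → p.1 = q.1 := by
  induction e with
  | leaf c =>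
    intro cur next _ p hp q hq _
    simp [rl, ETree.leafColors] at hp hq
    rw [hp, hq]
  | node c l r ihl ihr =>
    intro cur next hlt p hp q hq hpq
    by_cases h1 : l.root = c <;> by_cases h2 : r.root = c
    · rw [rl_tt h1 h2, leafColors_node, leafColors_node,
        zip_split (rl_length l cur next).symm, List.mem_append] at hp hq
      have cross : ∀ p' ∈ List.zip l.leafColors ((rl l cur next).1).leafColors,
          ∀ q' ∈ List.zip r.leafColors ((rl r cur (next + l.changes)).1).leafColors,
          p'.2 = q'.2 → p'.1 = q'.1 := by
        intro p' hp' q' hq' hpq'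
        have hp2 := rl_range l cur next hlt _ (List.of_mem_zip hp').2
        have hq2 := rl_range r cur (next + l.changes) (by omega) _ (List.of_mem_zip hq').2
        have hpb : p'.2 = cur := by omega
        have hqb : q'.2 = cur := by omega
        have e1 := rl_coherent l cur next hlt _ hp' hpb
        have e2 := rl_coherent r cur (next + l.changes) (by omega) _ hq' hqb
        rw [e1, e2, h1, h2]
      rcases hp with hp | hp <;> rcases hq with hq | hq
      · exact ihl cur next hlt _ hp _ hq hpq
      · exact cross _ hp _ hq hpq
      · exact (cross _ hq _ hp hpq.symm).symm
      · exact ihr cur (next + l.changes) (by omega) _ hp _ hq hpq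
    · rw [rl_tf h1 h2, leafColors_node, leafColors_node,
        zip_split (rl_length l cur next).symm, List.mem_append] at hp hq
      have cross : ∀ p' ∈ List.zip l.leafColors ((rl l cur next).1).leafColors,
          ∀ q' ∈ List.zip r.leafColors
            ((rl r (next + l.changes) (next + l.changes + 1)).1).leafColors,
          p'.2 = q'.2 → p'.1 = q'.1 := by
        intro p' hp' q' hq' hpq'
        have hp2 := rl_range l cur next hlt _ (List.of_mem_zip hp').2
        have hq2 := rl_range r (next + l.changes) (next + l.changes + 1) (by omega)
          _ (List.of_mem_zip hq').2
        omega
      rcases hp with hp | hp <;> rcases hq with hq | hq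
      · exact ihl cur next hlt _ hp _ hq hpq
      · exact cross _ hp _ hq hpq
      · exact (cross _ hq _ hp hpq.symm).symm
      · exact ihr (next + l.changes) (next + l.changes + 1) (by omega) _ hp _ hq hpq
    · rw [rl_ft h1 h2, leafColors_node, leafColors_node,
        zip_split (rl_length l next (next+1)).symm, List.mem_append] at hp hq
      have cross : ∀ p' ∈ List.zip l.leafColors ((rl l next (next+1)).1).leafColors,
          ∀ q' ∈ List.zip r.leafColors
            ((rl r cur (next + 1 + l.changes)).1).leafColors,
          p'.2 = q'.2 → p'.1 = q'.1 := by
        intro p' hp' q' hq' hpq'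
        have hp2 := rl_range l next (next + 1) (by omega) _ (List.of_mem_zip hp').2
        have hq2 := rl_range r cur (next + 1 + l.changes) (by omega)
          _ (List.of_mem_zip hq').2
        omega
      rcases hp with hp | hp <;> rcases hq with hq | hq
      · exact ihl next (next + 1) (by omega) _ hp _ hq hpq
      · exact cross _ hp _ hq hpq
      · exact (cross _ hq _ hp hpq.symm).symm
      · exact ihr cur (next + 1 + l.changes) (by omega) _ hp _ hq hpq
    · rw [rl_ff h1 h2, leafColors_node, leafColors_node,
        zip_split (rl_length l next (next+1)).symm, List.mem_append] at hp hq
      have cross : ∀ p' ∈ List.zip l.leafColors ((rl l next (next+1)).1).leafColors,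
          ∀ q' ∈ List.zip r.leafColors
            ((rl r (next + 1 + l.changes) (next + 1 + l.changes + 1)).1).leafColors,
          p'.2 = q'.2 → p'.1 = q'.1 := by
        intro p' hp' q' hq' hpq'
        have hp2 := rl_range l next (next + 1) (by omega) _ (List.of_mem_zip hp').2
        have hq2 := rl_range r (next + 1 + l.changes) (next + 1 + l.changes + 1) (by omega)
          _ (List.of_mem_zip hq').2
        omega
      rcases hp with hp | hp <;> rcases hq with hq | hq
      · exact ihl next (next + 1) (by omega) _ hp _ hq hpq
      · exact cross _ hp _ hq hpq
      · exact (cross _ hq _ hp hpq.symm).symm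
      · exact ihr (next + 1 + l.changes) (next + 1 + l.changes + 1) (by omega) _ hp _ hq hpq

lemma rl_LS {e : ETree C} (h : LS e) : ∀ cur next : ℕ, LS ((rl e cur next).1) := by
  induction h with
  | leaf c => intro cur next; exact .leaf _
  | @node l r c hl hr hor ihl ihr =>
    intro cur next
    by_cases h1 : l.root = c <;> by_cases h2 : r.root = c
    · rw [rl_tt h1 h2]; exact .node cur (ihl _ _) (ihr _ _) (Or.inl (rl_root _ _ _))
    · rw [rl_tf h1 h2]; exact .node cur (ihl _ _) (ihr _ _) (Or.inl (rl_root _ _ _))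
    · rw [rl_ft h1 h2]; exact .node cur (ihl _ _) (ihr _ _) (Or.inr (rl_root _ _ _))
    · exact absurd hor (by simp [h1, h2])

lemma rl_cur_mem {e : ETree C} (h : LS e) : ∀ cur next : ℕ,
    cur ∈ ((rl e cur next).1).leafColors := by
  induction h with
  | leaf c => intro cur next; simp [rl, ETree.leafColors]
  | @node l r c hl hr hor ihl ihr =>
    intro cur next
    by_cases h1 : l.root = c
    · by_cases h2 : r.root = c
      · rw [rl_tt h1 h2, leafColors_node]; exact List.mem_append_left _ (ihl _ _)
      · rw [rl_tf h1 h2, leafColors_node]; exact List.mem_append_left _ (ihl _ _)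
    · have h2 : r.root = c := hor.resolve_left h1
      rw [rl_ft h1 h2, leafColors_node]; exact List.mem_append_right _ (ihr _ _)

lemma rl_card {e : ETree C} (h : LS e) : ∀ cur next : ℕ, cur < next →
    ((rl e cur next).1).leafColors.toFinset.card = e.changes + 1 := by
  induction h with
  | leaf c => intro cur next _; simp [rl, ETree.leafColors, ETree.changes]
  | @node l r c hl hr hor ihl ihr =>
    intro cur next hlt
    by_cases h1 : l.root = c <;> by_cases h2 : r.root = c
    · rw [rl_tt h1 h2, leafColors_node, List.toFinset_append, changes_node,
        if_pos h1, if_pos h2]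
      have hA := ihl cur next hlt
      have hB := ihr cur (next + l.changes) (by omega)
      have hint : ((rl l cur next).1.leafColors.toFinset ∩
          (rl r cur (next + l.changes)).1.leafColors.toFinset) = {cur} := by
        apply Finset.Subset.antisymm
        · intro x hx
          rw [Finset.mem_inter, List.mem_toFinset, List.mem_toFinset] at hx
          have r1 := rl_range l cur next hlt x hx.1
          have r2 := rl_range r cur (next + l.changes) (by omega) x hx.2
          rw [Finset.mem_singleton]; omega
        · intro x hx
          rw [Finset.mem_singleton] at hx; subst hx
          rw [Finset.mem_inter, List.mem_toFinset, List.mem_toFinset]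
          exact ⟨rl_cur_mem hl _ _, rl_cur_mem hr _ _⟩
      have hcu := Finset.card_union_add_card_inter
        ((rl l cur next).1.leafColors.toFinset)
        ((rl r cur (next + l.changes)).1.leafColors.toFinset)
      rw [hint, hA, hB, Finset.card_singleton] at hcu
      omega
    · rw [rl_tf h1 h2, leafColors_node, List.toFinset_append, changes_node,
        if_pos h1, if_neg h2]
      have hA := ihl cur next hlt
      have hB := ihr (next + l.changes) (next + l.changes + 1) (by omega)
      rw [Finset.card_union_of_disjoint, hA, hB]
      · omega
      · rw [Finset.disjoint_left]
        intro x hx1 hx2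
        rw [List.mem_toFinset] at hx1 hx2
        have r1 := rl_range l cur next hlt x hx1
        have r2 := rl_range r (next + l.changes) (next + l.changes + 1) (by omega) x hx2
        omega
    · rw [rl_ft h1 h2, leafColors_node, List.toFinset_append, changes_node,
        if_neg h1, if_pos h2]
      have hA := ihl next (next + 1) (by omega)
      have hB := ihr cur (next + 1 + l.changes) (by omega)
      rw [Finset.card_union_of_disjoint, hA, hB]
      · omega
      · rw [Finset.disjoint_left]
        intro x hx1 hx2
        rw [List.mem_toFinset] at hx1 hx2
        have r1 := rl_range l next (next + 1) (by omega) x hx1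
        have r2 := rl_range r cur (next + 1 + l.changes) (by omega) x hx2
        omega
    · exact absurd hor (by simp [h1, h2])

lemma rl_shaped {t : PTree X} {e : ETree C} (h : Shaped t e) : ∀ cur next : ℕ,
    Shaped t ((rl e cur next).1) := by
  induction h with
  | leaf x c => intro cur next; exact .leaf x cur
  | @node l r el er c hl hr ihl ihr =>
    intro cur next
    by_cases h1 : el.root = c <;> by_cases h2 : er.root = c
    · rw [rl_tt h1 h2]; exact .node _ (ihl _ _) (ihr _ _)
    · rw [rl_tf h1 h2]; exact .node _ (ihl _ _) (ihr _ _)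
    · rw [rl_ft h1 h2]; exact .node _ (ihl _ _) (ihr _ _)
    · rw [rl_ff h1 h2]; exact .node _ (ihl _ _) (ihr _ _)

end Relabel2
section Surgery

open ETree List

variable {X C : Type} [DecidableEq C]

/-- Two state trees of the same shape. -/
inductive SameShape : ETree C → ETree C → Prop
  | leaf (c d : C) : SameShape (.leaf c) (.leaf d)
  | node {l r l' r' : ETree C} (c c' : C) :
      SameShape l l' → SameShape r r' → SameShape (.node c l r) (.node c' l' r')

lemma sameShape_refl (e : ETree C) : SameShape e e := by
  induction e with
  | leaf c => exact .leaf c c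
  | node c l r ihl ihr => exact .node c c ihl ihr

lemma Shaped.of_sameShape {t : PTree X} {e e' : ETree C}
    (h : Shaped t e) : SameShape e e' → Shaped t e' := by
  induction h generalizing e' with
  | leaf x c => intro hs; cases hs; exact .leaf _ _
  | @node l r el er c hl hr ihl ihr =>
    intro hs; cases hs with
    | node _ _ hsl hsr => exact .node _ (ihl hsl) (ihr hsr)

lemma map_rep_id {c b : C} : ∀ {lst : List C}, c ∉ lst →
    lst.map (fun z => if z = c then b else z) = lst := by
  intro lst h
  induction lst with
  | nil => rfl
  | cons a tl ih =>
    simp only [List.mem_cons, not_or] at h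
    simp only [List.map_cons, if_neg (fun hh : a = c => h.1 hh.symm), ih h.2]

lemma count_pos_of_mem {c : C} {lst : List C} (h : c ∈ lst) : 1 ≤ lst.count c :=
  List.one_le_count_iff.2 h

/-- Recoloring the (unique) component of the root, root color `c`, to
an arbitrary color `b`. -/
lemma surgery0 {c b : C} {e : ETree C} (hls : LS e) :
    e.root = c → e.leafColors.count c = 1 →
    ∃ e2 : ETree C, SameShape e e2 ∧ e2.root = b ∧
      e2.leafColors = e.leafColors.map (fun z => if z = c then b else z) ∧
      e2.changes ≤ e.changes := by
  induction hls with
  | leaf d =>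
    intro hroot _
    have hd : d = c := hroot
    refine ⟨.leaf b, .leaf d b, rfl, ?_, le_refl _⟩
    simp [ETree.leafColors, hd]
  | @node l r d hl hr hor ihl ihr =>
    intro hroot hcount
    have hd : d = c := hroot
    rw [hd] at hor ⊢
    rw [leafColors_node, List.count_append] at hcount
    by_cases hl1 : l.root = c
    · have hcl : 1 ≤ l.leafColors.count c :=
        count_pos_of_mem (hl1 ▸ hl.root_mem_leafColors)
      have hcr : r.leafColors.count c = 0 := by omega
      have hcnotr : c ∉ r.leafColors := by
        intro hmem; have := count_pos_of_mem hmem; omega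
      have hr1 : r.root ≠ c := fun hh => hcnotr (hh ▸ hr.root_mem_leafColors)
      obtain ⟨l2, hss, hroot2, hcol2, hch2⟩ := ihl hl1 (by omega)
      refine ⟨.node b l2 r, .node _ _ hss (sameShape_refl r), rfl, ?_, ?_⟩
      · rw [leafColors_node, leafColors_node, List.map_append, hcol2, map_rep_id hcnotr]
      · rw [changes_node, changes_node, hroot2, if_pos rfl, if_pos hl1, if_neg hr1]
        have : (if r.root = b then 0 else 1) ≤ 1 := by split_ifs <;> omega
        omega
    · have hl2 : r.root = c := hor.resolve_left hl1
      have hcr : 1 ≤ r.leafColors.count c :=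
        count_pos_of_mem (hl2 ▸ hr.root_mem_leafColors)
      have hcl : l.leafColors.count c = 0 := by omega
      have hcnotl : c ∉ l.leafColors := by
        intro hmem; have := count_pos_of_mem hmem; omega
      obtain ⟨r2, hss, hroot2, hcol2, hch2⟩ := ihr hl2 (by omega)
      refine ⟨.node b l r2, .node _ _ (sameShape_refl l) hss, rfl, ?_, ?_⟩
      · rw [leafColors_node, leafColors_node, List.map_append, hcol2, map_rep_id hcnotl]
      · rw [changes_node, changes_node, hroot2, if_pos rfl, if_pos hl2, if_neg hl1]
        have : (if l.root = b then 0 else 1) ≤ 1 := by split_ifs <;> omega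
        omega

/-- Recoloring a unique-colored leaf whose component does not contain the
root saves a mutation. -/
lemma surgery2 {c : C} {e : ETree C} (hls : LS e) :
    e.root ≠ c → e.leafColors.count c = 1 →
    ∃ (c'' : C) (e2 : ETree C), c'' ∈ e.leafColors ∧ c'' ≠ c ∧ SameShape e e2 ∧
      e2.root = e.root ∧
      e2.leafColors = e.leafColors.map (fun z => if z = c then c'' else z) ∧
      e2.changes + 1 ≤ e.changes := by
  induction hls with
  | leaf d =>
    intro hroot hcount
    exfalso
    have : d = c := by
      have h1 : (ETree.leaf d).leafColors = [d] := rfl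
      rw [h1, List.count_singleton] at hcount
      by_contra hne
      simp [hne] at hcount
    exact hroot this
  | @node l r a hl hr hor ihl ihr =>
    intro hroot hcount
    have hane : a ≠ c := hroot
    rw [leafColors_node, List.count_append] at hcount
    by_cases hside : 1 ≤ l.leafColors.count c
    · -- the c-leaf is in l
      have hcr : r.leafColors.count c = 0 := by omega
      have hcnotr : c ∉ r.leafColors := by
        intro hmem; have := count_pos_of_mem hmem; omega
      have hrr : r.root ≠ c := fun hh => hcnotr (hh ▸ hr.root_mem_leafColors)
      by_cases hl1 : l.root = c
      · -- component of the c-leaf touches the edge to the root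
        have hra : r.root = a := by
          rcases hor with h | h
          · exact absurd (hl1 ▸ h.symm) hane
          · exact h
        obtain ⟨l2, hss, hroot2, hcol2, hch2⟩ := surgery0 hl hl1 (by omega)
        refine ⟨a, .node a l2 r, ?_, hane, .node _ _ hss (sameShape_refl r), rfl, ?_, ?_⟩
        · rw [leafColors_node, List.mem_append]
          exact Or.inr (hra ▸ hr.root_mem_leafColors)
        · rw [leafColors_node, leafColors_node, List.map_append, hcol2, map_rep_id hcnotr]
        · rw [changes_node, changes_node, hroot2, if_pos rfl, if_pos (hra),
            if_neg (fun hh : l.root = a => hane (by rw [← hh]; exact hl1))]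
          omega
      · obtain ⟨c'', l2, hmem, hne, hss, hroot2, hcol2, hch2⟩ := ihl hl1 (by omega)
        refine ⟨c'', .node a l2 r, ?_, hne, .node _ _ hss (sameShape_refl r), rfl, ?_, ?_⟩
        · rw [leafColors_node, List.mem_append]; exact Or.inl hmem
        · rw [leafColors_node, leafColors_node, List.map_append, hcol2, map_rep_id hcnotr]
        · rw [changes_node, changes_node, hroot2]
          omega
    · -- the c-leaf is in r
      have hclz : l.leafColors.count c = 0 := by omega
      have hcnotl : c ∉ l.leafColors := by
        intro hmem; have := count_pos_of_mem hmem; omega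
      have hlr : l.root ≠ c := fun hh => hcnotl (hh ▸ hl.root_mem_leafColors)
      by_cases hr1 : r.root = c
      · have hla : l.root = a := by
          rcases hor with h | h
          · exact h
          · exact absurd (hr1 ▸ h.symm) hane
        obtain ⟨r2, hss, hroot2, hcol2, hch2⟩ := surgery0 hr hr1 (by omega)
        refine ⟨a, .node a l r2, ?_, hane, .node _ _ (sameShape_refl l) hss, rfl, ?_, ?_⟩
        · rw [leafColors_node, List.mem_append]
          exact Or.inl (hla ▸ hl.root_mem_leafColors)
        · rw [leafColors_node, leafColors_node, List.map_append, hcol2, map_rep_id hcnotl]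
        · rw [changes_node, changes_node, hroot2, if_pos rfl, if_pos (hla),
            if_neg (fun hh : r.root = a => hane (by rw [← hh]; exact hr1))]
          omega
      · obtain ⟨c'', r2, hmem, hne, hss, hroot2, hcol2, hch2⟩ := ihr hr1 (by omega)
        refine ⟨c'', .node a l r2, ?_, hne, .node _ _ (sameShape_refl l) hss, rfl, ?_, ?_⟩
        · rw [leafColors_node, List.mem_append]; exact Or.inr hmem
        · rw [leafColors_node, leafColors_node, List.map_append, hcol2, map_rep_id hcnotl]
        · rw [changes_node, changes_node, hroot2]
          omega

/-- Recoloring a unique-colored leaf when the component does contain the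
root but the tree has at least two leaves. -/
lemma surgery1 {c : C} {e : ETree C} (hls : LS e) (hroot : e.root = c)
    (hcount : e.leafColors.count c = 1) (hlen : 2 ≤ e.leafColors.length) :
    ∃ (c'' : C) (e2 : ETree C), c'' ∈ e.leafColors ∧ c'' ≠ c ∧ SameShape e e2 ∧
      e2.leafColors = e.leafColors.map (fun z => if z = c then c'' else z) ∧
      e2.changes + 1 ≤ e.changes := by
  cases hls with
  | leaf d => simp [ETree.leafColors] at hlen
  | @node l r d hl hr hor =>
    have hd : d = c := hroot
    rw [hd] at hor ⊢
    rw [leafColors_node, List.count_append] at hcount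
    by_cases hl1 : l.root = c
    · have hcl : 1 ≤ l.leafColors.count c :=
        count_pos_of_mem (hl1 ▸ hl.root_mem_leafColors)
      have hcr : r.leafColors.count c = 0 := by omega
      have hcnotr : c ∉ r.leafColors := by
        intro hmem; have := count_pos_of_mem hmem; omega
      have hrr : r.root ≠ c := fun hh => hcnotr (hh ▸ hr.root_mem_leafColors)
      obtain ⟨l2, hss, hroot2, hcol2, hch2⟩ := surgery0 (b := r.root) hl hl1 (by omega)
      refine ⟨r.root, .node r.root l2 r, ?_, hrr, .node _ _ hss (sameShape_refl r), ?_, ?_⟩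
      · rw [leafColors_node, List.mem_append]; exact Or.inr hr.root_mem_leafColors
      · rw [leafColors_node, leafColors_node, List.map_append, hcol2, map_rep_id hcnotr]
      · rw [changes_node, changes_node, hroot2, if_pos rfl,
          if_pos hl1, if_neg hrr]
        omega
    · have hr1 : r.root = c := hor.resolve_left hl1
      have hcr : 1 ≤ r.leafColors.count c :=
        count_pos_of_mem (hr1 ▸ hr.root_mem_leafColors)
      have hclz : l.leafColors.count c = 0 := by omega
      have hcnotl : c ∉ l.leafColors := by
        intro hmem; have := count_pos_of_mem hmem; omega
      obtain ⟨r2, hss, hroot2, hcol2, hch2⟩ := surgery0 (b := l.root) hr hr1 (by omega)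
      refine ⟨l.root, .node l.root l r2, ?_, hl1, .node _ _ (sameShape_refl l) hss, ?_, ?_⟩
      · rw [leafColors_node, List.mem_append]; exact Or.inl hl.root_mem_leafColors
      · rw [leafColors_node, leafColors_node, List.map_append, hcol2, map_rep_id hcnotl]
      · rw [changes_node, changes_node, hroot2, if_pos rfl,
          if_pos hr1, if_neg hl1]
        omega

end Surgery
section Bridge

open ETree

variable {X C D : Type}

lemma ite_tri [DecidableEq C] (a b c : C) :
    (if a = c then (0:ℕ) else 1) ≤ (if a = b then 0 else 1) + (if b = c then 0 else 1) := by
  by_cases h1 : a = b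
  · subst h1; simp
  · have h2 : (if a = c then (0:ℕ) else 1) ≤ 1 := by split_ifs <;> omega
    rw [if_neg h1]; omega

/-- Mapping states. -/
def ETree.emap (σ : C → D) : ETree C → ETree D
  | .leaf c => .leaf (σ c)
  | .node c l r => .node (σ c) (l.emap σ) (r.emap σ)

lemma emap_root (σ : C → D) (e : ETree C) : (e.emap σ).root = σ e.root := by
  cases e <;> rfl

lemma emap_changes [DecidableEq C] [DecidableEq D] (σ : C → D) (e : ETree C) :
    (e.emap σ).changes ≤ e.changes := by
  induction e with
  | leaf c => simp [ETree.emap, ETree.changes]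
  | node c l r ihl ihr =>
    rw [show (ETree.node c l r).emap σ = .node (σ c) (l.emap σ) (r.emap σ) from rfl,
      changes_node, changes_node, emap_root, emap_root]
    have key : ∀ d : C, (if σ d = σ c then (0:ℕ) else 1) ≤ (if d = c then 0 else 1) := by
      intro d
      by_cases hd : d = c
      · simp [hd]
      · rw [if_neg hd]; split_ifs <;> omega
    have h1 := key l.root
    have h2 := key r.root
    omega

lemma emap_isExtension {σ : C → D} {f : X → C} {t : PTree X} {e : ETree C}
    (h : IsExtension f t e) : IsExtension (σ ∘ f) t (e.emap σ) := by
  induction h with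
  | leaf x => exact IsExtension.leaf (f := σ ∘ f) x
  | node c hl hr ihl ihr => exact .node (σ c) ihl ihr

/-- Changing the character at a single taxon changes the parsimony score by
at most (the number of occurrences of that taxon). -/
lemma lip [DecidableEq X] [DecidableEq C] {h h' : X → C} {x : X} (hagree : ∀ y, y ≠ x → h y = h' y) :
    ∀ {t : PTree X} {e : ETree C}, IsExtension h t e →
    ∃ e' : ETree C, IsExtension h' t e' ∧
      e'.changes + (if e'.root = e.root then 0 else 1) ≤ e.changes + t.leaves.count x := by
  intro t e hext
  induction hext with
  | leaf y =>
    by_cases hyx : y = x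
    · refine ⟨.leaf (h' y), .leaf y, ?_⟩
      have : (PTree.leaf y).leaves.count x = 1 := by
        rw [show (PTree.leaf y).leaves = [y] from rfl, List.count_singleton]
        simp [hyx]
      rw [this]
      have : (if (ETree.leaf (h' y)).root = (ETree.leaf (h y)).root then (0:ℕ) else 1) ≤ 1 := by
        split_ifs <;> omega
      simpa [ETree.changes] using this
    · refine ⟨.leaf (h' y), .leaf y, ?_⟩
      have heq : h y = h' y := hagree y hyx
      simp [ETree.changes, ETree.root, heq]
  | @node l r gl gr c hl hr ihl ihr =>
    obtain ⟨el', hel', hbl⟩ := ihl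
    obtain ⟨er', her', hbr⟩ := ihr
    refine ⟨.node c el' er', .node c hel' her', ?_⟩
    rw [changes_node, changes_node]
    have t1 : (if el'.root = c then (0:ℕ) else 1) ≤
        (if el'.root = gl.root then 0 else 1) + (if gl.root = c then 0 else 1) :=
      ite_tri _ _ _
    have t2 : (if er'.root = c then (0:ℕ) else 1) ≤
        (if er'.root = gr.root then 0 else 1) + (if gr.root = c then 0 else 1) :=
      ite_tri _ _ _
    have hc : (PTree.node l r).leaves.count x = l.leaves.count x + r.leaves.count x := by
      simp [PTree.leaves]
    rw [hc, show (ETree.node c el' er').root = c from rfl,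
      show (ETree.node c gl gr).root = c from rfl, if_pos rfl]
    omega

/-- The rooted tree obtained from an unrooted one by rooting. -/
def urt : UTree X → PTree X
  | .single x y => .node (.leaf x) (.leaf y)
  | .triple a b c => .node a (.node b c)

lemma urt_leaves (T : UTree X) : (urt T).leaves = T.leaves := by
  cases T <;> simp [urt, PTree.leaves, UTree.leaves]

lemma isPhylo_urt {T : UTree X} (h : IsUPhylo T) : IsPhylo (urt T) := by
  obtain ⟨h1, h2⟩ := h
  exact ⟨by rw [urt_leaves]; exact h1, fun x => by rw [urt_leaves]; exact h2 x⟩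

lemma uextension_nonempty [DecidableEq C] (f : X → C) (T : UTree X) :
    { k : ℕ | ∃ g : UETree C, IsUExtension f T g ∧ g.changes = k }.Nonempty := by
  cases T with
  | single x y => exact ⟨_, .single (f x) (f y), .single x y, rfl⟩
  | triple a b c =>
    exact ⟨_, .triple (canonExt f a).root (canonExt f a) (canonExt f b) (canonExt f c),
      .triple _ (canonExt_isExtension f a) (canonExt_isExtension f b)
        (canonExt_isExtension f c), rfl⟩

lemma upscore_eq_pscore [DecidableEq C] (f : X → C) (T : UTree X) :
    upscore f T = pscore f (urt T) := by
  apply le_antisymm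
  · -- from a minimal rooted extension build an unrooted one
    obtain ⟨e, he, hch⟩ := exists_pscore_ext f (urt T)
    cases T with
    | single x y =>
      cases he with
      | node c hel her =>
        rename_i gl gr
        cases hel; cases her
        have hu : IsUExtension f (.single x y) (.single (f x) (f y) : UETree C) := .single x y
        refine le_trans (Nat.sInf_le ⟨_, hu, rfl⟩) ?_
        rw [← hch]
        show (if f x = f y then 0 else 1) ≤ _
        rw [changes_node]
        simp only [ETree.root, ETree.changes]
        by_cases h1 : f x = f y
        · simp [h1]
        · rw [if_neg h1]
          by_cases h2 : f x = c <;> by_cases h3 : f y = c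
          · exact absurd (h2.trans h3.symm) h1
          · simp [h2, h3]
          · simp [h2, h3]
          · simp [h2, h3]
    | triple a b c3 =>
      cases he with
      | node c0 he1 her =>
        rename_i g1 gr
        cases her with
        | node c he2 he3 =>
          rename_i g2 g3
          have hu : IsUExtension f (.triple a b c3) (.triple c g1 g2 g3) :=
            .triple c he1 he2 he3
          refine le_trans (Nat.sInf_le ⟨_, hu, rfl⟩) ?_
          rw [← hch]
          show ((if g1.root = c then 0 else 1) + (if g2.root = c then 0 else 1) +
              (if g3.root = c then 0 else 1)) + (g1.changes + (g2.changes + g3.changes)) ≤ _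
          rw [changes_node, changes_node]
          rw [show (ETree.node c g2 g3).root = c from rfl]
          have t1 : (if g1.root = c then (0:ℕ) else 1) ≤
              (if g1.root = c0 then 0 else 1) + (if c = c0 then 0 else 1) := by
            by_cases hcc : c = c0
            · subst hcc; simp
            · rw [if_neg hcc]; split_ifs <;> omega
          omega
  · -- from a minimal unrooted extension build a rooted one with equal cost
    have hne := uextension_nonempty f T
    obtain ⟨u, hu, hch⟩ := Nat.sInf_mem hne
    cases hu with
    | single x y =>
      have he : IsExtension f (urt (.single x y : UTree X))
          (.node (f x) (.leaf (f x)) (.leaf (f y))) :=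
        .node (f x) (.leaf x) (.leaf y)
      refine le_trans (pscore_le_changes he) ?_
      rw [← show (UETree.single (f x) (f y)).changes = upscore f (UTree.single x y) from hch]
      show ((if f x = f x then 0 else 1) + (if f y = f x then 0 else 1)) + (0 + 0) ≤
        (if f x = f y then 0 else 1)
      rw [if_pos rfl]
      by_cases h1 : f x = f y
      · simp [h1]
      · rw [if_neg h1, if_neg (fun hh : f y = f x => h1 hh.symm)]
    | @triple t1 t2 t3 e1 e2 e3 c he1 he2 he3 =>
      have he : IsExtension f (urt (.triple t1 t2 t3)) (.node c e1 (.node c e2 e3)) :=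
        .node c he1 (.node c he2 he3)
      refine le_trans (pscore_le_changes he) ?_
      rw [← show (UETree.triple c e1 e2 e3).changes = upscore f (UTree.triple t1 t2 t3) from hch]
      rw [changes_node, changes_node]
      show _ ≤ ((if e1.root = c then 0 else 1) + (if e2.root = c then 0 else 1) +
          (if e3.root = c then 0 else 1)) + (e1.changes + (e2.changes + e3.changes))
      rw [show (ETree.node c e2 e3).root = c from rfl, if_pos rfl]
      omega

end Bridge
section ListUtil

variable {X : Type} [DecidableEq X]

lemma map_getD_indexOf : ∀ (L : List X) (ids : List ℕ), L.Nodup → ids.length = L.length →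
    L.map (fun x => ids.getD (L.idxOf x) 0) = ids := by
  intro L
  induction L with
  | nil =>
    intro ids _ hlen
    cases ids with
    | nil => rfl
    | cons i tl' => simp at hlen
  | cons a tl ih =>
    intro ids hnd hlen
    cases ids with
    | nil => simp at hlen
    | cons i tl' =>
      rw [List.nodup_cons] at hnd
      simp only [List.map_cons]
      have h1 : (i :: tl').getD ((a :: tl).idxOf a) 0 = i := by
        rw [List.idxOf_cons_self]; rfl
      rw [h1]
      have h2 : tl.map (fun x => (i :: tl').getD ((a :: tl).idxOf x) 0) =
          tl.map (fun x => tl'.getD (tl.idxOf x) 0) := by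
        apply List.map_congr_left
        intro x hx
        have hxa : a ≠ x := fun hh => hnd.1 (hh ▸ hx)
        rw [List.idxOf_cons_ne _ hxa]
        rfl
      rw [h2, ih tl' hnd.2 (by simpa using hlen)]

lemma two_le_count_map {g : X → ℕ} {c : ℕ} :
    ∀ {L : List X} {x y : X}, x ∈ L → y ∈ L → x ≠ y → g x = c → g y = c →
      2 ≤ (L.map g).count c := by
  intro L
  induction L with
  | nil => intro x y hx _ _ _ _; simp at hx
  | cons a tl ih =>
    intro x y hx hy hxy hgx hgy
    simp only [List.map_cons, List.count_cons]
    rcases List.mem_cons.1 hx with hxa | hx'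
    · have hy' : y ∈ tl := by
        rcases List.mem_cons.1 hy with hya | h
        · exact absurd (hxa.trans hya.symm) hxy
        · exact h
      have hmem : c ∈ tl.map g := List.mem_map.2 ⟨y, hy', hgy⟩
      have h1 : 1 ≤ (tl.map g).count c := List.one_le_count_iff.2 hmem
      have h2 : (if g a == c then 1 else 0) = 1 := by
        rw [if_pos]; rw [hxa] at hgx; exact beq_iff_eq.2 hgx
      omega
    · rcases List.mem_cons.1 hy with hya | hy'
      · have hx'' : x ∈ tl := hx'
        have hmem : c ∈ tl.map g := List.mem_map.2 ⟨x, hx'', hgx⟩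
        have h1 : 1 ≤ (tl.map g).count c := List.one_le_count_iff.2 hmem
        have h2 : (if g a == c then 1 else 0) = 1 := by
          rw [if_pos]; rw [hya] at hgy; exact beq_iff_eq.2 hgy
        omega
      · have := ih hx' hy' hxy hgx hgy
        omega

lemma exists_count_one {lst : List ℕ} (h : lst.length < 2 * lst.toFinset.card) :
    ∃ c, lst.count c = 1 := by
  by_contra hno
  push_neg at hno
  have hsum : ∑ a ∈ lst.toFinset, lst.count a = lst.length := by
    have := Multiset.toFinset_sum_count_eq (lst : Multiset ℕ)
    simpa using this
  have hge : ∀ a ∈ lst.toFinset, 2 ≤ lst.count a := by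
    intro a ha
    have h1 : 1 ≤ lst.count a := List.one_le_count_iff.2 (List.mem_toFinset.1 ha)
    have := hno a
    omega
  have : 2 * lst.toFinset.card ≤ ∑ a ∈ lst.toFinset, lst.count a := by
    calc 2 * lst.toFinset.card = ∑ _a ∈ lst.toFinset, 2 := by
          rw [Finset.sum_const, smul_eq_mul]; ring
      _ ≤ _ := Finset.sum_le_sum hge
  omega

end ListUtil
section Main

open ETree

variable {X : Type} [Fintype X] [DecidableEq X]

lemma natAbs_mem_bdd (T1 T2 : UTree X) :
    BddAbove { k : ℕ | ∃ f : X → ℕ, k = ((upscore f T1 : ℤ) - (upscore f T2 : ℤ)).natAbs } := by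
  refine ⟨(urt T1).psize + (urt T2).psize, ?_⟩
  rintro k ⟨f, rfl⟩
  have h1 : upscore f T1 ≤ (urt T1).psize := by
    rw [upscore_eq_pscore]; exact pscore_le_psize f _
  have h2 : upscore f T2 ≤ (urt T2).psize := by
    rw [upscore_eq_pscore]; exact pscore_le_psize f _
  omega

lemma udMP_le {T1 T2 : UTree X} (f : X → ℕ) :
    ((upscore f T1 : ℤ) - (upscore f T2 : ℤ)).natAbs ≤ udMP T1 T2 :=
  le_csSup (natAbs_mem_bdd T1 T2) ⟨f, rfl⟩

/-- Main construction: assuming some character attains the `dMP` value with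
`T2`-score larger, there is an optimal character convex on `T1` with few states. -/
lemma helper (n : ℕ) (hn : 2 ≤ n) (hcard : Fintype.card X = n)
    (T1 T2 : UTree X) (h1 : IsUPhylo T1) (h2 : IsUPhylo T2)
    (hex : ∃ f0 : X → ℕ, pscore f0 (urt T2) = pscore f0 (urt T1) + udMP T1 T2) :
    ∃ f : X → ℕ,
      ((upscore f T1 : ℤ) - (upscore f T2 : ℤ)).natAbs = udMP T1 T2 ∧
      (Finset.image f Finset.univ).card ≤ n / 2 ∧
      upscore f T1 = (Finset.image f Finset.univ).card - 1 := by
  classical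
  obtain ⟨hnodup, hcomp⟩ := isPhylo_urt h1
  obtain ⟨hnodup2, hcomp2⟩ := isPhylo_urt h2
  set D := udMP T1 T2 with hD
  set R1 := urt T1 with hR1
  set R2 := urt T2 with hR2
  set L : List X := R1.leaves with hL
  have hlen : L.length = n := by
    have huniv : L.toFinset = Finset.univ :=
      Finset.eq_univ_iff_forall.2 (fun x => List.mem_toFinset.2 (hcomp x))
    have hthis := List.toFinset_card_of_nodup hnodup
    rw [huniv, Finset.card_univ, hcard] at hthis
    exact hthis.symm
  -- the set of scores on R1 among optimal characters with larger T2-score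
  set M : Set ℕ := {m | ∃ f : X → ℕ, pscore f R1 = m ∧ pscore f R2 = m + D} with hM
  have hMne : M.Nonempty := by
    obtain ⟨f0, hf0⟩ := hex
    exact ⟨pscore f0 R1, f0, rfl, hf0⟩
  obtain ⟨f, hf1, hf2⟩ := Nat.sInf_mem hMne
  set s1 := sInf M with hs1
  -- a minimal leaf-supported extension of f on R1
  obtain ⟨e, he, hch, hls⟩ := exists_min_LS_ext f R1
  rw [hf1] at hch
  set e' : ETree ℕ := (rl e 0 1).1 with he'
  set ids : List ℕ := e'.leafColors with hids
  have hcolors_e : e.leafColors = L.map f := isExtension_leafColors he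
  have hidlen : ids.length = L.length := by
    rw [hids, he', rl_length, hcolors_e, List.length_map]
  set f' : X → ℕ := fun x => ids.getD (L.idxOf x) 0 with hf'
  have hmapf' : L.map f' = ids := map_getD_indexOf L ids hnodup hidlen
  have hext' : IsExtension f' R1 e' :=
    isExtension_of_shaped (rl_shaped (isExtension_shaped he) 0 1) hmapf'.symm
  have hch' : e'.changes = s1 := by
    rw [he', rl_changes e 0 1 (by omega), hch]
  -- membership of pairs in the zip
  have hpair : ∀ x : X, (f x, f' x) ∈ List.zip (L.map f) ids := by
    intro x
    have hxL : x ∈ L := hcomp x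
    have hix : L.idxOf x < L.length := List.idxOf_lt_length_iff.2 hxL
    have hix2 : L.idxOf x < ids.length := by omega
    have hzlen : L.idxOf x < (List.zip (L.map f) ids).length := by
      rw [List.length_zip]
      simp only [List.length_map]
      omega
    have hval : (List.zip (L.map f) ids)[L.idxOf x] = (f x, f' x) := by
      rw [List.getElem_zip]
      congr 1
      · rw [List.getElem_map, List.getElem_idxOf hix]
      · rw [hf']
        simp only
        rw [List.getD_eq_getElem ids 0 hix2]
    rw [← hval]
    exact (List.zip (L.map f) ids).getElem_mem hzlen
  have hfun : ∀ x y : X, f' x = f' y → f x = f y := by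
    intro x y hxy
    have hhx : (f x, f' x) ∈ List.zip e.leafColors ids := by
      rw [hcolors_e]; exact hpair x
    have hhy : (f y, f' y) ∈ List.zip e.leafColors ids := by
      rw [hcolors_e]; exact hpair y
    exact rl_fun e 0 1 (by omega) _ hhx _ hhy hxy
  -- the coarsening map σ with f = σ ∘ f'
  set σ : ℕ → ℕ := fun m => if hm : ∃ x, f' x = m then f hm.choose else 0 with hσdef
  have hσ : ∀ x, σ (f' x) = f x := by
    intro x
    have hm : ∃ y, f' y = f' x := ⟨x, rfl⟩
    rw [hσdef]
    simp only [dif_pos hm]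
    exact hfun _ _ hm.choose_spec
  -- scores of f'
  have ha_le : pscore f' R1 ≤ s1 := by
    have := pscore_le_changes hext'
    omega
  have hb_ge : s1 + D ≤ pscore f' R2 := by
    obtain ⟨e2, he2, hch2⟩ := exists_pscore_ext f' R2
    have hme : IsExtension (σ ∘ f') R2 (e2.emap σ) := emap_isExtension he2
    have hfe : IsExtension f R2 (e2.emap σ) :=
      isExtension_congr (fun y _ => hσ y) hme
    have := pscore_le_changes hfe
    have := emap_changes σ e2
    omega
  have hub : ((upscore f' T1 : ℤ) - (upscore f' T2 : ℤ)).natAbs ≤ D := udMP_le f'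
  rw [upscore_eq_pscore, upscore_eq_pscore, ← hR1, ← hR2] at hub
  have hpin1 : pscore f' R1 = s1 := by omega
  have hpin2 : pscore f' R2 = s1 + D := by omega
  -- the number of states of f'
  have himg : Finset.image f' Finset.univ = ids.toFinset := by
    ext m
    rw [Finset.mem_image, List.mem_toFinset, ← hmapf', List.mem_map]
    constructor
    · rintro ⟨x, _, rfl⟩; exact ⟨x, hcomp x, rfl⟩
    · rintro ⟨x, _, rfl⟩; exact ⟨x, Finset.mem_univ x, rfl⟩
  have hr : (Finset.image f' Finset.univ).card = s1 + 1 := by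
    rw [himg, hids, he']
    rw [rl_card hls 0 1 (by omega), hch]
  -- the state bound
  have hstates : s1 + 1 ≤ n / 2 := by
    by_contra hbig
    push_neg at hbig
    -- there is a state used by exactly one taxon
    have hcnt : ∃ c, ids.count c = 1 := by
      apply exists_count_one
      have : ids.toFinset.card = s1 + 1 := by rw [← himg, hr]
      rw [this, hidlen, hlen]
      omega
    obtain ⟨c, hc1⟩ := hcnt
    have hcmem : c ∈ ids := List.one_le_count_iff.1 (by omega)
    obtain ⟨x0, _, hx0⟩ := List.mem_map.1 (hmapf' ▸ hcmem)
    have hxuniq : ∀ y, y ≠ x0 → f' y ≠ c := by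
      intro y hy hyc
      have := two_le_count_map (hcomp y) (hcomp x0) hy hyc hx0
      rw [hmapf'] at this
      omega
    -- surgery on e'
    have hls' : LS e' := rl_LS hls 0 1
    have hsurj : ∃ (c'' : ℕ) (e2 : ETree ℕ), c'' ∈ ids ∧ c'' ≠ c ∧ SameShape e' e2 ∧
        e2.leafColors = ids.map (fun z => if z = c then c'' else z) ∧
        e2.changes + 1 ≤ e'.changes := by
      by_cases hrt : e'.root = c
      · obtain ⟨c'', e2, hm, hne, hss, hcolx, hchx⟩ :=
          surgery1 hls' hrt hc1 (by rw [← hids, hidlen, hlen]; omega)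
        exact ⟨c'', e2, hm, hne, hss, hcolx, hchx⟩
      · obtain ⟨c'', e2, hm, hne, hss, _, hcolx, hchx⟩ := surgery2 hls' hrt hc1
        exact ⟨c'', e2, hm, hne, hss, hcolx, hchx⟩
    obtain ⟨c'', e2, hc''mem, hc''ne, hss, hcol2, hch2⟩ := hsurj
    set f'' : X → ℕ := fun y => if f' y = c then c'' else f' y with hf''
    have hext2 : IsExtension f'' R1 e2 := by
      apply isExtension_of_shaped ((isExtension_shaped hext').of_sameShape hss)
      rw [hcol2, ← hmapf', List.map_map]
      rfl
    have hA : pscore f'' R1 + 1 ≤ s1 := by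
      have := pscore_le_changes hext2
      omega
    have hB : s1 + D ≤ pscore f'' R2 + 1 := by
      obtain ⟨e3, he3, hch3⟩ := exists_pscore_ext f'' R2
      have hagree : ∀ y, y ≠ x0 → f'' y = f' y := by
        intro y hy
        rw [hf'']
        simp only [if_neg (hxuniq y hy)]
      obtain ⟨e4, he4, hch4⟩ := lip hagree he3
      have hcount : R2.leaves.count x0 = 1 := by
        have hmem : x0 ∈ R2.leaves := hcomp2 x0
        have hle := List.nodup_iff_count_le_one.1 hnodup2 x0
        have := List.one_le_count_iff.2 hmem
        omega
      have := pscore_le_changes he4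
      rw [hcount] at hch4
      have hite : (0:ℕ) ≤ (if e4.root = e3.root then 0 else 1) := by omega
      omega
    have hub2 : ((upscore f'' T1 : ℤ) - (upscore f'' T2 : ℤ)).natAbs ≤ D := udMP_le f''
    rw [upscore_eq_pscore, upscore_eq_pscore, ← hR1, ← hR2] at hub2
    have hmemM : pscore f'' R1 ∈ M := by
      refine ⟨f'', rfl, ?_⟩
      omega
    have := Nat.sInf_le hmemM
    omega
  refine ⟨f', ?_, ?_, ?_⟩
  · rw [upscore_eq_pscore, upscore_eq_pscore, ← hR1, ← hR2, hpin1, hpin2]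
    omega
  · rw [hr]; exact hstates
  · rw [upscore_eq_pscore, ← hR1, hpin1, hr]
    omega

end Main
lemma udMP_comm {X : Type} (T1 T2 : UTree X) : udMP T1 T2 = udMP T2 T1 := by
  unfold udMP
  congr 1
  ext k
  constructor <;> rintro ⟨f, rfl⟩ <;> exact ⟨f, by omega⟩

/-- for unrooted binary trees `T1`, `T2` on the same set of
`n ≥ 2` taxa there is a character attaining `d_MP(T1,T2)` which is convex on
one of the two trees (parsimony score = number of used states − 1) and uses at
most `⌊n/2⌋` states. -/
theorem exists_optimal_convex_few_states {X : Type} [Fintype X] [DecidableEq X]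
    (n : ℕ) (hn : 2 ≤ n) (hcard : Fintype.card X = n)
    (T1 T2 : UTree X) (h1 : IsUPhylo T1) (h2 : IsUPhylo T2) :
    ∃ f : X → ℕ,
      ((upscore f T1 : ℤ) - (upscore f T2 : ℤ)).natAbs = udMP T1 T2 ∧
      (Finset.image f Finset.univ).card ≤ n / 2 ∧
      (upscore f T1 = (Finset.image f Finset.univ).card - 1 ∨
        upscore f T2 = (Finset.image f Finset.univ).card - 1) := by
  classical
  have hSne : { k : ℕ | ∃ f : X → ℕ,
      k = ((upscore f T1 : ℤ) - (upscore f T2 : ℤ)).natAbs }.Nonempty :=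
    ⟨_, (fun _ => 0), rfl⟩
  have hmem : udMP T1 T2 ∈ { k : ℕ | ∃ f : X → ℕ,
      k = ((upscore f T1 : ℤ) - (upscore f T2 : ℤ)).natAbs } :=
    Nat.sSup_mem hSne (natAbs_mem_bdd T1 T2)
  obtain ⟨f0, hf0⟩ := hmem
  rcases le_total (upscore f0 T1) (upscore f0 T2) with hle | hle
  · have hex : ∃ g : X → ℕ, pscore g (urt T2) = pscore g (urt T1) + udMP T1 T2 := by
      refine ⟨f0, ?_⟩
      rw [← upscore_eq_pscore, ← upscore_eq_pscore]
      omega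
    obtain ⟨f, hval, hcard2, hconv⟩ := helper n hn hcard T1 T2 h1 h2 hex
    exact ⟨f, hval, hcard2, Or.inl hconv⟩
  · have hcomm : udMP T2 T1 = udMP T1 T2 := udMP_comm T2 T1
    have hex : ∃ g : X → ℕ, pscore g (urt T1) = pscore g (urt T2) + udMP T2 T1 := by
      refine ⟨f0, ?_⟩
      rw [hcomm, ← upscore_eq_pscore, ← upscore_eq_pscore]
      omega
    obtain ⟨f, hval, hcard2, hconv⟩ := helper n hn hcard T2 T1 h2 h1 hex
    refine ⟨f, ?_, hcard2, Or.inr hconv⟩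
    rw [hcomm] at hval
    omega

end MPDist
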